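/- arXiv:2510.04972 — 3 statements merged into one kernel-verified Lean document; each statement's English description precedes it below -/
import Mathlib

section
/- Let w : B^N → ℝ, let S_k = {j₁,…,j_k} ⊆ [N] be distinct indices, let S̃ ⊆ [N] be disjoint from S_k, and let f : ℝ → ℝ have k continuous bounded derivatives. Then for every 1 ≤ k̃ ≤ k, Δ(f∘w; S̃; S_{k̃}) = ∑_{D ⊆ S_{k̃}∖{j₁}} ∫₀¹ Δ(w; D ∪ S̃; S_{k̃}∖D) · Δ(f′(w^{j₁} + z(w − w^{j₁})); S̃; D) dz, where S_{k̃} = {j₁,…,j_{k̃}}. -/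
/-- `σ_S`: the configuration `σ` with all coordinates in `S` replaced by `b0`. -/
def subst {B : Type*} {N : ℕ} (b0 : B) (σ : Fin N → B) (S : Finset (Fin N)) :
    Fin N → B :=
  fun i => if i ∈ S then b0 else σ i

/-- The discrete mixed difference `Δ(η; A; D) = ∑_{E ⊆ D} (-1)^{|E|} η(σ_{A ∪ E})`. -/
noncomputable def disc {B : Type*} {N : ℕ} (b0 : B) (σ : Fin N → B)
    (η : (Fin N → B) → ℝ) (A D : Finset (Fin N)) : ℝ :=
  ∑ E ∈ D.powerset, (-1 : ℝ) ^ E.card * η (subst b0 σ (A ∪ E))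

/-!
Removing the distinguished index `j₁` from `S` turns `Δ(f∘w; S̃; S)` into the difference of
`τ ↦ f(w τ) - f(w τ^{j₁})`, and the fundamental theorem of calculus on the segment from
`w τ^{j₁}` to `w τ` writes this as `∫₀¹ u τ · g_z τ dz` with `u = w - w^{j₁}` and
`g_z = f′(w^{j₁} + z u)`. The discrete differences commute with the integral and obey the Leibniz
rule `Δ(u g; A; T) = ∑_{D ⊆ T} Δ(u; D ∪ A; T ∖ D) Δ(g; A; D)` with `T = S ∖ {j₁}`; finally
`Δ(u; D ∪ S̃; T ∖ D) = Δ(w; D ∪ S̃; S ∖ D)` by the same first-difference identity.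
-/

section DiscreteDifference

variable {B : Type*} {N : ℕ} (b0 : B) (σ : Fin N → B)

lemma subst_subst (T S : Finset (Fin N)) :
    subst b0 (subst b0 σ T) S = subst b0 σ (S ∪ T) := by
  funext i
  by_cases hS : i ∈ S <;> by_cases hT : i ∈ T <;> simp [subst, hS, hT]

lemma disc_insert (η : (Fin N → B) → ℝ) (A : Finset (Fin N)) {x : Fin N}
    {T : Finset (Fin N)} (hx : x ∉ T) :
    disc b0 σ η A (insert x T) = disc b0 σ η A T - disc b0 σ η (A ∪ {x}) T := by
  rw [disc, Finset.sum_powerset_insert hx, disc, disc, sub_eq_add_neg, ← Finset.sum_neg_distrib]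
  congr 1
  refine Finset.sum_congr rfl fun E hE => ?_
  have hxE : x ∉ E := fun h => hx (Finset.mem_powerset.mp hE h)
  rw [Finset.card_insert_of_notMem hxE, pow_succ,
    show A ∪ insert x E = A ∪ {x} ∪ E by ext; simp]
  ring

lemma disc_eq_disc_sub_subst (η : (Fin N → B) → ℝ) (A : Finset (Fin N)) {j : Fin N}
    {T : Finset (Fin N)} (hj : j ∈ T) :
    disc b0 σ η A T = disc b0 σ (fun τ => η τ - η (subst b0 τ {j})) A (T.erase j) := by
  conv_lhs => rw [← Finset.insert_erase hj]
  rw [disc_insert b0 σ η A (Finset.notMem_erase j T), disc, disc, disc,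
    ← Finset.sum_sub_distrib]
  refine Finset.sum_congr rfl fun E _ => ?_
  rw [subst_subst, show {j} ∪ (A ∪ E) = A ∪ {j} ∪ E by ext; simp]
  ring

lemma disc_mul (u v : (Fin N → B) → ℝ) (A T : Finset (Fin N)) :
    disc b0 σ (fun τ => u τ * v τ) A T =
      ∑ D ∈ T.powerset, disc b0 σ u (D ∪ A) (T \ D) * disc b0 σ v A D := by
  induction T using Finset.induction generalizing A with
  | empty => simp [disc]
  | @insert x T hx ih =>
    rw [disc_insert b0 σ _ A hx, ih A, ih (A ∪ {x}), Finset.sum_powerset_insert hx,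
      ← Finset.sum_sub_distrib, ← Finset.sum_add_distrib]
    refine Finset.sum_congr rfl fun D hD => ?_
    have hxD : x ∉ D := fun h => hx (Finset.mem_powerset.mp hD h)
    have hxTD : x ∉ T \ D := fun h => hx (Finset.mem_sdiff.mp h).1
    rw [show insert x T \ D = insert x (T \ D) by ext; simp; grind,
      show insert x T \ insert x D = T \ D by ext; simp; grind,
      show insert x D ∪ A = D ∪ (A ∪ {x}) by ext; simp,
      disc_insert b0 σ u (D ∪ A) hxTD, disc_insert b0 σ v A hxD, Finset.union_assoc]
    ring

lemma disc_intervalIntegral (F : ℝ → (Fin N → B) → ℝ) (A T : Finset (Fin N)) {a b : ℝ}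
    (hF : ∀ τ, IntervalIntegrable (fun z => F z τ) MeasureTheory.volume a b) :
    disc b0 σ (fun τ => ∫ z in a..b, F z τ) A T = ∫ z in a..b, disc b0 σ (F z) A T := by
  unfold disc
  rw [intervalIntegral.integral_finsetSum fun E _ => (hF _).const_mul _]
  simp only [intervalIntegral.integral_const_mul]

end DiscreteDifference

lemma sub_eq_integral_mul_deriv {f : ℝ → ℝ} (hf : ContDiff ℝ 1 f) (a b : ℝ) :
    f b - f a = ∫ z in (0:ℝ)..1, (b - a) * deriv f (a + z * (b - a)) := by
  have hd : Differentiable ℝ f := hf.differentiable one_ne_zero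
  have hc : Continuous (deriv f) := hf.continuous_deriv le_rfl
  rw [intervalIntegral.integral_const_mul, ← smul_eq_mul]
  simp_rw [mul_comm _ (b - a)]
  rw [intervalIntegral.smul_integral_comp_add_mul, intervalIntegral.integral_deriv_eq_sub
    (fun x _ => hd x) (hc.intervalIntegrable _ _)]
  ring_nf

theorem disc_comp_eq_sum_integral {B : Type*} {N : ℕ} (b0 : B) (σ : Fin N → B)
    (w : (Fin N → B) → ℝ) {f : ℝ → ℝ} (hf : ContDiff ℝ 1 f) (A : Finset (Fin N))
    {j₁ : Fin N} {S : Finset (Fin N)} (hj₁ : j₁ ∈ S) :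
    disc b0 σ (f ∘ w) A S =
      ∑ D ∈ (S.erase j₁).powerset,
        ∫ z in (0:ℝ)..1,
          disc b0 σ w (D ∪ A) (S \ D) *
            disc b0 σ
              (fun τ => deriv f (w (subst b0 τ {j₁}) + z * (w τ - w (subst b0 τ {j₁}))))
              A D := by
  set u : (Fin N → B) → ℝ := fun τ => w τ - w (subst b0 τ {j₁})
  set g : ℝ → (Fin N → B) → ℝ := fun z τ => deriv f (w (subst b0 τ {j₁}) + z * u τ)
  have hg : ∀ τ, Continuous fun z => g z τ := fun τ =>
    (hf.continuous_deriv le_rfl).comp (by fun_prop)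
  have hdisc_g : ∀ D, Continuous fun z => disc b0 σ (g z) A D := fun D =>
    continuous_finsetSum _ fun E _ => continuous_const.mul (hg _)
  calc disc b0 σ (f ∘ w) A S
      = disc b0 σ (fun τ => ∫ z in (0:ℝ)..1, u τ * g z τ) A (S.erase j₁) := by
        rw [disc_eq_disc_sub_subst b0 σ _ A hj₁]
        simp only [Function.comp_apply, sub_eq_integral_mul_deriv hf, u, g]
    _ = ∫ z in (0:ℝ)..1, ∑ D ∈ (S.erase j₁).powerset,
          disc b0 σ u (D ∪ A) (S.erase j₁ \ D) * disc b0 σ (g z) A D := by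
        rw [disc_intervalIntegral b0 σ (fun z τ => u τ * g z τ) A _
          fun τ => (continuous_const.mul (hg τ)).intervalIntegrable _ _]
        simp only [disc_mul]
    _ = _ := by
        rw [intervalIntegral.integral_finsetSum
          (f := fun D z => disc b0 σ u (D ∪ A) (S.erase j₁ \ D) * disc b0 σ (g z) A D)
          fun D _ => (continuous_const.mul (hdisc_g D)).intervalIntegrable _ _]
        refine Finset.sum_congr rfl fun D hD => ?_
        have hj₁D : j₁ ∈ S \ D := Finset.mem_sdiff.mpr
          ⟨hj₁, fun h => Finset.notMem_erase j₁ S (Finset.mem_powerset.mp hD h)⟩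
        rw [disc_eq_disc_sub_subst b0 σ w _ hj₁D, ← Finset.erase_sdiff_comm]

/-- Discrete Faà di Bruno type identity: for distinct indices `j₁, …, j_k`, a set `S̃`
disjoint from them, and `f` with `k` continuous bounded derivatives, for every
`1 ≤ k̃ ≤ k`,
`Δ(f∘w; S̃; S_{k̃}) = ∑_{D ⊆ S_{k̃}∖{j₁}} ∫₀¹ Δ(w; D ∪ S̃; S_{k̃}∖D) ·
  Δ(f′(w^{j₁} + z (w − w^{j₁})); S̃; D) dz`. -/
theorem stmt_2 {B : Type*} {N k : ℕ} (b0 : B) (σ : Fin N → B)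
    (w : (Fin N → B) → ℝ) (j : Fin k → Fin N)
    (Stilde : Finset (Fin N))
    (f : ℝ → ℝ) (hf : ContDiff ℝ (k : ℕ∞) f)
    (kt : ℕ) (h1 : 1 ≤ kt) (h2 : kt ≤ k) :
    disc b0 σ (f ∘ w) Stilde
        (Finset.image j (Finset.univ.filter fun i : Fin k => (i : ℕ) < kt)) =
      ∑ D ∈ ((Finset.image j (Finset.univ.filter fun i : Fin k => (i : ℕ) < kt)).erase
          (j ⟨0, by omega⟩)).powerset,
        ∫ z in (0:ℝ)..1,
          disc b0 σ w (D ∪ Stilde)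
              ((Finset.image j (Finset.univ.filter fun i : Fin k => (i : ℕ) < kt)) \ D) *
            disc b0 σ
              (fun τ => deriv f
                (w (subst b0 τ {j ⟨0, by omega⟩}) +
                  z * (w τ - w (subst b0 τ {j ⟨0, by omega⟩}))))
              Stilde D := by
  have hf₁ : ContDiff ℝ 1 f := hf.of_le (by exact_mod_cast h1.trans h2)
  have hj₁ : j ⟨0, by omega⟩ ∈
      Finset.image j (Finset.univ.filter fun i : Fin k => (i : ℕ) < kt) :=
    Finset.mem_image_of_mem j (by simp; omega)
  exact disc_comp_eq_sum_integral b0 σ w hf₁ Stilde hj₁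
end

section
/- Let ϱ be a non-degenerate symmetric probability measure on [−1,1] with log-MGF Ξ, and assume Ξ‴(x) ≤ 0 for x > 0 and Ξ‴(x) ≥ 0 for x < 0. Fix r with 0 ≤ r ≤ 1/Ξ″(0) and s = 0. Then the function φ̃(x) := x − Ξ′(rx) satisfies φ̃(x) > 0 for all x > 0 (when r < 1/Ξ″(0)), and in all cases x = 0 is the unique solution of x = Ξ′(rx), i.e., the unique maximizer of φ(x) = rx²/2 − x(Ξ′)⁻¹(x) + Ξ((Ξ′)⁻¹(x)) on the range of Ξ′. -/
/-!
Write `G = Ξ′`. Symmetry of `ϱ` makes `G` odd, the support bound gives `G ≤ 1`, and `G` is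
real-analytic because the moment generating function is entire. The GHS condition says that `G′`
is nonincreasing on `[0, ∞)`, so there `G` lies below its tangent `t ↦ G′(0) t`. Hence
`x − G(rx) ≥ (1 − r G′(0)) x` for `x > 0`, which gives positivity when `r G′(0) < 1`, and a
positive fixed point forces `r G′(0) = 1` with `G` touching its tangent at `rx > 0`. Then `G` is
linear on `[0, rx]`, by analyticity linear on all of `ℝ` with positive slope, contradicting
`G ≤ 1`. Negative fixed points are excluded by oddness.
-/

open MeasureTheory ProbabilityTheory Set Real

lemma mul_le_one_of_le_one_div {r c : ℝ} (hr0 : 0 ≤ r) (hr : r ≤ 1 / c) : r * c ≤ 1 := by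
  rcases le_or_gt c 0 with hc | hc
  · nlinarith
  · rwa [le_div_iff₀ hc] at hr

lemma mul_lt_one_of_lt_one_div {r c : ℝ} (hr0 : 0 ≤ r) (hr : r < 1 / c) : r * c < 1 := by
  rcases le_or_gt c 0 with hc | hc
  · nlinarith
  · rwa [lt_div_iff₀ hc] at hr

lemma Function.Even.deriv {f : ℝ → ℝ} (hf : f.Even) : (deriv f).Odd := fun x ↦ by
  have h := deriv_comp_neg (f := f) (x := x)
  rw [show (fun x ↦ f (-x)) = f from funext hf] at h
  rw [h, neg_neg]

section Tangent

variable {G : ℝ → ℝ}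

lemma monotoneOn_deriv_zero_mul_sub (hG : Differentiable ℝ G)
    (hanti : AntitoneOn (deriv G) (Ici 0)) :
    MonotoneOn (fun t ↦ deriv G 0 * t - G t) (Ici 0) := by
  have hd : Differentiable ℝ (fun t ↦ deriv G 0 * t - G t) := by fun_prop
  refine monotoneOn_of_deriv_nonneg (convex_Ici 0) hd.continuous.continuousOn
    hd.differentiableOn fun t ht ↦ ?_
  rw [interior_Ici] at ht
  have hderiv : deriv (fun t ↦ deriv G 0 * t - G t) t = deriv G 0 - deriv G t := by
    simpa using (((hasDerivAt_id t).const_mul (deriv G 0)).fun_sub (hG t).hasDerivAt).deriv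
  rw [hderiv, sub_nonneg]
  exact hanti self_mem_Ici (mem_Ioi.1 ht).le (mem_Ioi.1 ht).le

lemma apply_le_deriv_zero_mul (hG : Differentiable ℝ G) (hG0 : G 0 = 0)
    (hanti : AntitoneOn (deriv G) (Ici 0)) {t : ℝ} (ht : 0 ≤ t) : G t ≤ deriv G 0 * t := by
  have h := monotoneOn_deriv_zero_mul_sub hG hanti self_mem_Ici ht ht
  simp only [mul_zero, hG0, sub_zero] at h
  linarith

lemma eq_deriv_zero_mul_of_apply_eq (hG : AnalyticOnNhd ℝ G univ) (hG0 : G 0 = 0)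
    (hanti : AntitoneOn (deriv G) (Ici 0)) {a : ℝ} (ha : 0 < a) (hGa : G a = deriv G 0 * a) :
    G = fun t ↦ deriv G 0 * t := by
  have hmono := monotoneOn_deriv_zero_mul_sub (fun t ↦ (hG t trivial).differentiableAt) hanti
  have hIoo : ∀ t ∈ Ioo 0 a, G t = deriv G 0 * t := by
    intro t ht
    have h₁ := hmono self_mem_Ici (mem_Ici.2 ht.1.le) ht.1.le
    have h₂ := hmono (mem_Ici.2 ht.1.le) (mem_Ici.2 ha.le) ht.2.le
    simp only [mul_zero, hG0, hGa, sub_self] at h₁ h₂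
    linarith
  refine hG.eq_of_eventuallyEq (analyticOnNhd_const.mul analyticOnNhd_id) (z₀ := a / 2) ?_
  filter_upwards [Ioo_mem_nhds (half_pos ha) (half_lt_self ha)] with t ht using hIoo t ht

lemma sub_apply_mul_pos (hG : Differentiable ℝ G) (hG0 : G 0 = 0)
    (hanti : AntitoneOn (deriv G) (Ici 0)) {r : ℝ} (hr0 : 0 ≤ r) (hr : r * deriv G 0 < 1)
    {x : ℝ} (hx : 0 < x) : 0 < x - G (r * x) := by
  have h := apply_le_deriv_zero_mul hG hG0 hanti (mul_nonneg hr0 hx.le)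
  nlinarith

lemma eq_apply_mul_iff_eq_zero (hG : AnalyticOnNhd ℝ G univ) (hodd : G.Odd)
    (hbdd : BddAbove (range G)) (hanti : AntitoneOn (deriv G) (Ici 0)) {r : ℝ} (hr0 : 0 ≤ r)
    (hr : r * deriv G 0 ≤ 1) (x : ℝ) : x = G (r * x) ↔ x = 0 := by
  have hG0 : G 0 = 0 := hodd.map_zero
  suffices hpos : ∀ x, 0 < x → x ≠ G (r * x) by
    refine ⟨fun hx ↦ ?_, fun hx ↦ by rw [hx, mul_zero, hG0]⟩
    rcases lt_trichotomy x 0 with hneg | hzero | hpos'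
    · exact absurd (by rw [mul_neg, hodd, ← hx]) (hpos (-x) (neg_pos.2 hneg))
    · exact hzero
    · exact absurd hx (hpos x hpos')
  intro x hx hfix
  have hle := apply_le_deriv_zero_mul (fun t ↦ (hG t trivial).differentiableAt) hG0 hanti
    (mul_nonneg hr0 hx.le)
  have hrc : r * deriv G 0 = 1 := by nlinarith
  have hrpos : 0 < r := lt_of_le_of_ne hr0 (by rintro rfl; simp at hrc)
  have hlin := eq_deriv_zero_mul_of_apply_eq hG hG0 hanti (mul_pos hrpos hx)
    (by rw [← hfix]; linear_combination -x * hrc)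
  obtain ⟨M, hM⟩ := hbdd
  have hcpos : 0 < deriv G 0 := pos_of_mul_pos_right (hrc ▸ one_pos) hr0
  have hbig := hM ⟨(M + 1) / deriv G 0, rfl⟩
  rw [congrFun hlin, mul_div_cancel₀ _ hcpos.ne'] at hbig
  linarith

end Tangent

namespace ProbabilityTheory

variable {Ω : Type*} [MeasurableSpace Ω] {X : Ω → ℝ} {μ : Measure Ω}

lemma integrableExpSet_eq_univ_of_ae_abs_le [IsFiniteMeasure μ] (hX : AEMeasurable X μ)
    {C : ℝ} (hC : ∀ᵐ ω ∂μ, |X ω| ≤ C) : integrableExpSet X μ = univ := by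
  refine eq_univ_of_forall fun t ↦ ?_
  refine Integrable.of_bound (by fun_prop) (exp (|t| * C)) ?_
  filter_upwards [hC] with ω hω
  rw [norm_of_nonneg (exp_pos _).le, exp_le_exp]
  calc t * X ω ≤ |t * X ω| := le_abs_self _
    _ = |t| * |X ω| := abs_mul _ _
    _ ≤ |t| * C := by gcongr

lemma deriv_cgf_le_of_ae_le [IsProbabilityMeasure μ] {t : ℝ}
    (ht : t ∈ interior (integrableExpSet X μ)) {C : ℝ} (hC : ∀ᵐ ω ∂μ, X ω ≤ C) :
    deriv (cgf X μ) t ≤ C := by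
  have := isProbabilityMeasure_tilted (interior_subset (s := integrableExpSet X μ) ht)
  have hC' : ∀ᵐ ω ∂μ.tilted (t * X ·), X ω ≤ C := (tilted_absolutelyContinuous μ _).ae_le hC
  have hX : Integrable X (μ.tilted (t * X ·)) := (memLp_tilted_mul ht 1).integrable (by simp)
  have h := integral_mono_ae hX (integrable_const C) hC'
  rw [integral_const, probReal_univ, one_smul] at h
  rwa [← integral_tilted_mul_self ht]

lemma even_cgf_id_of_map_neg_eq {μ : Measure ℝ} (hsym : μ.map (fun x ↦ -x) = μ) :
    (cgf id μ).Even := fun t ↦ by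
  rw [cgf, cgf, ← mgf_neg]
  conv_rhs => rw [← hsym, mgf_id_map (by fun_prop)]
  rfl

end ProbabilityTheory

theorem stmt_11_general (ϱ : Measure ℝ) [IsProbabilityMeasure ϱ]
    (hsupp : ϱ ((Set.Icc (-1 : ℝ) 1)ᶜ) = 0)
    (hsym : ϱ.map (fun x => -x) = ϱ)
    (Ξ : ℝ → ℝ) (hΞ : ∀ t, Ξ t = Real.log (∫ y, Real.exp (t * y) ∂ϱ))
    (hGHS₁ : ∀ x : ℝ, 0 < x → iteratedDeriv 3 Ξ x ≤ 0)
    (r : ℝ) (hr0 : 0 ≤ r) (hr1 : r ≤ 1 / iteratedDeriv 2 Ξ 0) :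
    (r < 1 / iteratedDeriv 2 Ξ 0 → ∀ x : ℝ, 0 < x → 0 < x - deriv Ξ (r * x)) ∧
      ∀ x : ℝ, x = deriv Ξ (r * x) ↔ x = 0 := by
  obtain rfl : Ξ = cgf id ϱ := funext hΞ
  have hbound : ∀ᵐ y ∂ϱ, |y| ≤ 1 :=
    (ae_iff.2 hsupp : ∀ᵐ y ∂ϱ, y ∈ Icc (-1) 1).mono fun y hy ↦ abs_le.2 hy
  have hint : interior (integrableExpSet id ϱ) = univ := by
    rw [integrableExpSet_eq_univ_of_ae_abs_le aemeasurable_id hbound, interior_univ]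
  have hanalytic : AnalyticOnNhd ℝ (deriv (cgf id ϱ)) univ := (hint ▸ analyticOnNhd_cgf).deriv
  have hodd := (even_cgf_id_of_map_neg_eq hsym).deriv
  have hbdd : BddAbove (range (deriv (cgf id ϱ))) :=
    ⟨1, forall_mem_range.2 fun t ↦ deriv_cgf_le_of_ae_le (hint ▸ mem_univ t)
      (hbound.mono fun y hy ↦ (abs_le.1 hy).2)⟩
  have hanti : AntitoneOn (deriv (deriv (cgf id ϱ))) (Ici 0) := by
    have hd : Differentiable ℝ (deriv (deriv (cgf id ϱ))) :=
      fun t ↦ (hanalytic.deriv t trivial).differentiableAt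
    refine antitoneOn_of_deriv_nonpos (convex_Ici 0) hd.continuous.continuousOn
      hd.differentiableOn fun t ht ↦ ?_
    rw [interior_Ici] at ht
    simpa only [iteratedDeriv_succ, iteratedDeriv_zero] using hGHS₁ t ht
  rw [iteratedDeriv_succ, iteratedDeriv_one] at hr1
  refine ⟨fun hr x hx ↦ ?_, eq_apply_mul_iff_eq_zero hanalytic hodd hbdd hanti hr0
    (mul_le_one_of_le_one_div hr0 hr1)⟩
  rw [iteratedDeriv_succ, iteratedDeriv_one] at hr
  exact sub_apply_mul_pos (fun t ↦ (hanalytic t trivial).differentiableAt)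
    hodd.map_zero hanti hr0 (mul_lt_one_of_lt_one_div hr0 hr) hx

/-- Uniqueness regime `Θ₁₁`: under the GHS-type sign condition on `Ξ‴`, for
`0 ≤ r ≤ 1/Ξ″(0)` and `s = 0`, the function `φ̃(x) = x − Ξ′(rx)` is positive for
`x > 0` when `r < 1/Ξ″(0)`, and in all cases `x = 0` is the unique solution of
`x = Ξ′(rx)`. -/
theorem stmt_11 (ϱ : Measure ℝ) [IsProbabilityMeasure ϱ]
    (hsupp : ϱ ((Set.Icc (-1 : ℝ) 1)ᶜ) = 0)
    (hnd : ∀ a : ℝ, ϱ ≠ Measure.dirac a)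
    (hsym : ϱ.map (fun x => -x) = ϱ)
    (Ξ : ℝ → ℝ) (hΞ : ∀ t, Ξ t = Real.log (∫ y, Real.exp (t * y) ∂ϱ))
    (hGHS₁ : ∀ x : ℝ, 0 < x → iteratedDeriv 3 Ξ x ≤ 0)
    (hGHS₂ : ∀ x : ℝ, x < 0 → 0 ≤ iteratedDeriv 3 Ξ x)
    (r : ℝ) (hr0 : 0 ≤ r) (hr1 : r ≤ 1 / iteratedDeriv 2 Ξ 0) :
    (r < 1 / iteratedDeriv 2 Ξ 0 → ∀ x : ℝ, 0 < x → 0 < x - deriv Ξ (r * x)) ∧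
      ∀ x : ℝ, x = deriv Ξ (r * x) ↔ x = 0 :=
  stmt_11_general ϱ hsupp hsym Ξ hΞ hGHS₁ r hr0 hr1
end

section
/- For the Ising model with matrix A (symmetric, nonnegative entries, zero diagonal) on spins σ ∈ {−1,1}^N, the conditional mean t_{j₁} = tanh(∑_k A(j₁,k)σ_k) satisfies the second-order discrete difference bound |t_{j₁} − t_{j₁}^{j₂} − t_{j₁}^{j₃} + t_{j₁}^{j₂,j₃}| ≤ A(j₁,j₂)·A(j₁,j₃) for distinct j₁, j₂, j₃, where superscripts denote setting the corresponding spins to 0. -/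
/-- `t_{j₁}^S = tanh(∑_{k ∉ S} A(j₁,k) σ_k)`: the Ising conditional mean with the
spins in `S` set to `0`. -/
noncomputable def isingCondMean {N : ℕ} (A : Fin N → Fin N → ℝ) (σ : Fin N → ℝ)
    (j₁ : Fin N) (S : Finset (Fin N)) : ℝ :=
  Real.tanh (∑ k ∈ Finset.univ \ S, A j₁ k * σ k)

/-!
Write `t^S = tanh (T - ∑_{k ∈ S} A(j₁,k) σ_k)` with `T = ∑_k A(j₁,k) σ_k`. The quantity to bound is
then the mixed second difference of `tanh` with increments `b = A(j₁,j₂) σ_{j₂}` and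
`c = A(j₁,j₃) σ_{j₃}`, and by the mean value theorem applied twice such a difference is at most
`Lip(tanh') |b| |c|`. Since `tanh' = 1 - tanh²` has derivative `-2 tanh (1 - tanh²)`, of absolute
value at most `1`, and `|σ_j| = 1`, the bound is `A(j₁,j₂) A(j₁,j₃)`.
-/

open Real NNReal

theorem abs_mixed_diff_le_of_lipschitzWith_deriv {f f' : ℝ → ℝ} {K : ℝ≥0}
    (hf : ∀ x, HasDerivAt f (f' x) x) (hf' : LipschitzWith K f') (a b c : ℝ) :
    |f (a + b + c) - f (a + b) - f (a + c) + f a| ≤ K * |b| * |c| := by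
  have hg : ∀ x, HasDerivAt (fun y => f (y + c) - f y) (f' (x + c) - f' x) x := fun x =>
    ((hf (x + c)).comp_add_const x c).sub (hf x)
  have hg' : ∀ x, ‖f' (x + c) - f' x‖ ≤ K * |c| := fun x => by
    simpa [Real.dist_eq] using hf'.dist_le_mul (x + c) x
  have := convex_univ.norm_image_sub_le_of_norm_hasDerivWithin_le
    (fun x _ => (hg x).hasDerivWithinAt) (fun x _ => hg' x) (Set.mem_univ a) (Set.mem_univ (a + b))
  simp only [Real.norm_eq_abs, add_sub_cancel_left] at this
  calc |f (a + b + c) - f (a + b) - f (a + c) + f a|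
      = |f (a + b + c) - f (a + b) - (f (a + c) - f a)| := by ring_nf
    _ ≤ K * |c| * |b| := by simpa only [add_right_comm a c b] using this
    _ = K * |b| * |c| := by ring

namespace Real

theorem hasDerivAt_tanh (x : ℝ) : HasDerivAt tanh (1 - tanh x ^ 2) x := by
  have h := (hasDerivAt_sinh x).div (hasDerivAt_cosh x) (cosh_pos x).ne'
  rw [show sinh / cosh = tanh from funext fun y => (tanh_eq_sinh_div_cosh y).symm] at h
  refine h.congr_deriv ?_
  rw [tanh_eq_sinh_div_cosh]
  field_simp

theorem abs_two_mul_tanh_mul_one_sub_tanh_sq_le_one (x : ℝ) :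
    |2 * tanh x * (1 - tanh x ^ 2)| ≤ 1 := by
  have hpos : 0 < 1 - tanh x ^ 2 := sub_pos.2 (tanh_sq_lt_one x)
  rw [abs_mul, abs_mul, abs_two, abs_of_pos hpos, ← sq_abs]
  have hs0 : 0 ≤ |tanh x| := abs_nonneg _
  -- with `s = |tanh x|`: `1 - 2 s (1 - s²) = 2 s (s - 1)² + (2 s - 1)²`
  nlinarith [mul_nonneg hs0 (sq_nonneg (|tanh x| - 1)), sq_nonneg (2 * |tanh x| - 1)]

theorem lipschitzWith_one_sub_tanh_sq : LipschitzWith 1 fun x => 1 - tanh x ^ 2 := by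
  have hd : ∀ x, HasDerivAt (fun y => 1 - tanh y ^ 2) (-(2 * tanh x * (1 - tanh x ^ 2))) x :=
    fun x => by simpa using ((hasDerivAt_tanh x).pow 2).const_sub 1
  refine lipschitzOnWith_univ.1 <| convex_univ.lipschitzOnWith_of_nnnorm_hasDerivWithin_le
    (fun x _ => (hd x).hasDerivWithinAt) fun x _ => ?_
  rw [← NNReal.coe_le_coe, coe_nnnorm, norm_neg, Real.norm_eq_abs, NNReal.coe_one]
  exact abs_two_mul_tanh_mul_one_sub_tanh_sq_le_one x

theorem abs_tanh_mixed_diff_le (a b c : ℝ) :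
    |tanh (a + b + c) - tanh (a + b) - tanh (a + c) + tanh a| ≤ |b| * |c| := by
  simpa using abs_mixed_diff_le_of_lipschitzWith_deriv hasDerivAt_tanh
    lipschitzWith_one_sub_tanh_sq a b c

end Real

theorem isingCondMean_eq_tanh_sub {N : ℕ} (A : Fin N → Fin N → ℝ) (σ : Fin N → ℝ) (j : Fin N)
    (S : Finset (Fin N)) :
    isingCondMean A σ j S = tanh (∑ k, A j k * σ k - ∑ k ∈ S, A j k * σ k) := by
  rw [isingCondMean, Finset.sum_sdiff_eq_sub (Finset.subset_univ S)]

theorem stmt_13_general {N : ℕ} (A : Fin N → Fin N → ℝ) (σ : Fin N → ℝ)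
    (hσ : ∀ i, σ i = 1 ∨ σ i = -1)
    (hnn : ∀ i j, 0 ≤ A i j)
    (j₁ j₂ j₃ : Fin N) (h23 : j₂ ≠ j₃) :
    |isingCondMean A σ j₁ ∅ - isingCondMean A σ j₁ {j₂} - isingCondMean A σ j₁ {j₃} +
        isingCondMean A σ j₁ {j₂, j₃}| ≤ A j₁ j₂ * A j₁ j₃ := by
  have hterm : ∀ j, |A j₁ j * σ j| = A j₁ j := fun j => by
    rcases hσ j with h | h <;> simp [h, abs_of_nonneg (hnn j₁ j)]
  simp only [isingCondMean_eq_tanh_sub, Finset.sum_empty, Finset.sum_singleton, Finset.sum_pair h23]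
  set T := ∑ k, A j₁ k * σ k
  set b := A j₁ j₂ * σ j₂
  set c := A j₁ j₃ * σ j₃
  calc _ = |tanh (T - b - c + c + b) - tanh (T - b - c + c) - tanh (T - b - c + b) +
          tanh (T - b - c)| := by ring_nf
    _ ≤ |c| * |b| := abs_tanh_mixed_diff_le _ _ _
    _ = A j₁ j₂ * A j₁ j₃ := by rw [hterm, hterm, mul_comm]

/-- Second-order discrete difference bound for the Ising conditional mean:
`|t_{j₁} − t_{j₁}^{j₂} − t_{j₁}^{j₃} + t_{j₁}^{j₂,j₃}| ≤ A(j₁,j₂) · A(j₁,j₃)`. -/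
theorem stmt_13 {N : ℕ} (A : Fin N → Fin N → ℝ) (σ : Fin N → ℝ)
    (hσ : ∀ i, σ i = 1 ∨ σ i = -1)
    (hsym : ∀ i j, A i j = A j i) (hnn : ∀ i j, 0 ≤ A i j) (hdiag : ∀ i, A i i = 0)
    (j₁ j₂ j₃ : Fin N) (h12 : j₁ ≠ j₂) (h13 : j₁ ≠ j₃) (h23 : j₂ ≠ j₃) :
    |isingCondMean A σ j₁ ∅ - isingCondMean A σ j₁ {j₂} - isingCondMean A σ j₁ {j₃} +
        isingCondMean A σ j₁ {j₂, j₃}| ≤ A j₁ j₂ * A j₁ j₃ :=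
  stmt_13_general A σ hσ hnn j₁ j₂ j₃ h23
end
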